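/- Let 3 < k < n. Every basis tensor of C^{⊗k} occurring with nonzero coefficient in any of the three elements Σ_{p=1}^{k}(1^{⊗(p−1)} ⊗ ∂ ⊗ 1^{⊗(k−p)})(Δ_k(P)), (Δ_{k−1} ⊗ 1)(Δ_2(P)) + (1 ⊗ Δ_{k−1})(Δ_2(P)), and Σ_{j=0}^{k−2}(1^{⊗j} ⊗ Δ_2 ⊗ 1^{⊗(k−2−j)})(Δ_{k−1}(P)) contains exactly one tensor factor which is a vertex v_m; moreover, whenever a factor e_i stands immediately to the left of that vertex factor v_m one has i < m, and whenever a factor e_j stands immediately to the right of v_m one has m ≤ j. (Here the tensor products of maps are evaluated with the Koszul sign convention.) -/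

import Mathlib

noncomputable section

/-- Cells of an `n`-gon: `v i` models the vertex `v_{i+1}`, `e i` models the edge `e_{i+1}`
(so indices are 0-based), and `F` models the 2-cell `P`. -/
inductive Cell (n : ℕ) : Type where
  | v : Fin n → Cell n
  | e : Fin n → Cell n
  | F : Cell n
deriving DecidableEq

/-- `Tens R n k` models `C^{⊗ k}`, the free `R`-module on `k`-tuples of cells. -/
abbrev Tens (R : Type) [CommRing R] (n k : ℕ) : Type := (Fin k → Cell n) →₀ R

/-- The basis tensor corresponding to a tuple of cells. -/
def bt (R : Type) [CommRing R] {n k : ℕ} (x : Fin k → Cell n) : Tens R n k :=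
  Finsupp.single x 1

/-- Degree of a cell. -/
def degC {n : ℕ} : Cell n → ℕ
  | .v _ => 0
  | .e _ => 1
  | .F => 2

/-- `(-1)^m` in `R`. -/
def sgn (R : Type) [CommRing R] (m : ℤ) : R := if Even m then 1 else -1

/-- The boundary operator on basis cells: `∂(v_i) = 0`, `∂(e_i) = v_{i+1} - v_i` for `i < n`,
`∂(e_n) = v_n - v_1`, `∂(P) = e_1 + ⋯ + e_{n-1} - e_n`. -/
def dB (R : Type) [CommRing R] (n : ℕ) : Cell n → Tens R n 1
  | .v _ => 0
  | .e i =>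
      if h : (i : ℕ) + 1 < n then
        bt R (fun _ => Cell.v ⟨(i : ℕ) + 1, h⟩) - bt R (fun _ => Cell.v i)
      else
        bt R (fun _ => Cell.v i) - bt R (fun _ => Cell.v ⟨0, i.pos⟩)
  | .F => ∑ i : Fin n, (if (i : ℕ) + 1 < n then (1 : R) else -1) • bt R (fun _ => Cell.e i)

/-- `Σ_{0<i_1<⋯<i_k<n} e_{i_1} ⊗ ⋯ ⊗ e_{i_k}` (with 0-based indices: strictly increasing
tuples of edge indices all `< n-1`). -/
def esum (R : Type) [CommRing R] (n k : ℕ) : Tens R n k :=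
  ∑ f : Fin k → Fin n,
    if (∀ p q : Fin k, p < q → f p < f q) ∧ (∀ p : Fin k, ((f p) : ℕ) + 1 < n) then
      bt R (fun p => Cell.e (f p))
    else 0

/-- The `A_∞`-coalgebra operations on basis cells: `DeltaB R n 2` is the Kravatz diagonal
`Δ₂` and for `k ≥ 3`, `DeltaB R n k` is `Δ_k`, which vanishes on vertices and edges and sends
`P` to `Σ_{0<i_1<⋯<i_k<n} e_{i_1} ⊗ ⋯ ⊗ e_{i_k}`. -/
def DeltaB (R : Type) [CommRing R] (n : ℕ) (k : ℕ) : Cell n → Tens R n k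
  | .v i => if k = 2 then bt R (fun _ => Cell.v i) else 0
  | .e i =>
      if k = 2 then
        if h : (i : ℕ) + 1 < n then
          bt R (fun p => if (p : ℕ) = 0 then Cell.v i else Cell.e i) +
            bt R (fun p => if (p : ℕ) = 0 then Cell.e i else Cell.v ⟨(i : ℕ) + 1, h⟩)
        else
          bt R (fun p => if (p : ℕ) = 0 then Cell.v ⟨0, i.pos⟩ else Cell.e i) +
            bt R (fun p => if (p : ℕ) = 0 then Cell.e i else Cell.v i)
      else 0
  | .F =>
      esum R n k +
        (if h : k = 2 ∧ 0 < n then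
          bt R (fun p => if (p : ℕ) = 0 then Cell.v ⟨0, h.2⟩ else Cell.F) +
            bt R (fun p => if (p : ℕ) = 0 then Cell.F
                  else Cell.v ⟨n - 1, Nat.sub_lt h.2 Nat.one_pos⟩)
        else 0)

/-- Extension of a map defined on basis tensors to a linear map. -/
def lext (R : Type) [CommRing R] (n : ℕ) {k m : ℕ} (φ : (Fin k → Cell n) → Tens R n m) :
    Tens R n k →ₗ[R] Tens R n m :=
  Finsupp.linearCombination R φ

/-- Splicing a `j`-tuple into a `k`-tuple at position `a`, producing an `m`-tuple
(meaningful when `m = k + j - 1` and `a < k`). -/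
def splice {n k j : ℕ} (m a : ℕ) (x : Fin k → Cell n) (y : Fin j → Cell n) :
    Fin m → Cell n := fun q =>
  if h1 : (q : ℕ) < a ∧ (q : ℕ) < k then x ⟨q, h1.2⟩
  else if h2 : a ≤ (q : ℕ) ∧ (q : ℕ) - a < j then y ⟨(q : ℕ) - a, h2.2⟩
  else if h3 : (q : ℕ) + 1 - j < k then x ⟨(q : ℕ) + 1 - j, h3⟩
  else Cell.F

/-- `opp R n k m j a p g` is the linear map `1^{⊗a} ⊗ g ⊗ 1^{⊗(k-1-a)} : C^{⊗k} → C^{⊗m}`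
(meaningful when `m = k + j - 1`), where `g` is the basis-level description of an operation
`C → C^{⊗j}` of degree `p`, evaluated with the Koszul sign convention. -/
def opp (R : Type) [CommRing R] (n : ℕ) (k m j a : ℕ) (p : ℤ) (g : Cell n → Tens R n j) :
    Tens R n k →ₗ[R] Tens R n m :=
  lext R n fun x =>
    if ha : a < k then
      sgn R (p * ∑ q : Fin k, if (q : ℕ) < a then (degC (x q) : ℤ) else 0) •
        Finsupp.mapDomain (splice m a x) (g (x ⟨a, ha⟩))
    else 0

/-- `Δ_k` as a linear map `C → C^{⊗k}`. -/
def Dmap (R : Type) [CommRing R] (n k : ℕ) : Tens R n 1 →ₗ[R] Tens R n k :=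
  lext R n fun x => DeltaB R n k (x 0)

/-- The boundary `∂` as a linear map `C → C`. -/
def bdry (R : Type) [CommRing R] (n : ℕ) : Tens R n 1 →ₗ[R] Tens R n 1 :=
  lext R n fun x => dB R n (x 0)

/-- The top cell `P` as a chain. -/
def cellP (R : Type) [CommRing R] (n : ℕ) : Tens R n 1 := bt R (fun _ => Cell.F)

end

/-!
Every term is obtained by applying `∂` or `Δ₂` to one factor of a tensor
`e_{i_1} ⊗ ⋯ ⊗ e_{i_r}` with `i_1 < ⋯ < i_r < n`, or `Δ_{k-1}` to the factor `P` of
`v_1 ⊗ P` or `P ⊗ v_n`. In each case the only vertex `v_m` produced either replaces or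
accompanies an edge `e_i` with `m ∈ {i, i+1}`, or sits at an end of the tensor as `v_1` or `v_n`.
Monotonicity of the edge indices then puts every edge to the left of `v_m` below `m` and every
edge to its right at or above `m`.
-/

lemma Finsupp.exists_ne_zero_of_finsetSum_apply_ne_zero {ι α M : Type*} [AddCommMonoid M]
    {s : Finset ι} {v : ι → α →₀ M} {a : α} (h : (∑ i ∈ s, v i) a ≠ 0) :
    ∃ i ∈ s, v i a ≠ 0 :=
  Finset.exists_ne_zero_of_sum_ne_zero (by rwa [← Finsupp.finsetSum_apply])

lemma Finsupp.exists_ne_zero_of_linearCombination_apply_ne_zero {α β S : Type*} [Semiring S]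
    {φ : α → β →₀ S} {f : α →₀ S} {b : β} (h : Finsupp.linearCombination S φ f b ≠ 0) :
    ∃ a, f a ≠ 0 ∧ φ a b ≠ 0 := by
  rw [Finsupp.linearCombination_apply, Finsupp.sum, Finsupp.finsetSum_apply] at h
  obtain ⟨a, -, hne⟩ := Finset.exists_ne_zero_of_sum_ne_zero h
  rw [Finsupp.smul_apply, smul_eq_mul] at hne
  exact ⟨a, left_ne_zero_of_mul hne, right_ne_zero_of_mul hne⟩

lemma Finsupp.exists_eq_of_mapDomain_apply_ne_zero {α β M : Type*} [AddCommMonoid M]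
    {g : α → β} {v : α →₀ M} {b : β} (h : Finsupp.mapDomain g v b ≠ 0) :
    ∃ a, v a ≠ 0 ∧ g a = b := by
  classical
  obtain ⟨a, ha, rfl⟩ :=
    Finset.mem_image.mp (Finsupp.mapDomain_support (Finsupp.mem_support_iff.mpr h))
  exact ⟨a, Finsupp.mem_support_iff.mp ha, rfl⟩

section

variable {R : Type} [CommRing R] {n : ℕ}

lemma StrictMono.val_lt_val {k : ℕ} {f : Fin k → Fin n} (hf : StrictMono f) {q r : ℕ}
    (hq : q < k) (hr : r < k) (hqr : q < r) : (f ⟨q, hq⟩ : ℕ) < f ⟨r, hr⟩ :=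
  hf (Fin.mk_lt_mk.mpr hqr)

lemma bt_apply {k : ℕ} (a x : Fin k → Cell n) : bt R a x = if a = x then 1 else 0 := by
  simp [bt, Finsupp.single_apply]

lemma exists_of_opp_apply_ne_zero {k m j a : ℕ} {s : ℤ} {g : Cell n → Tens R n j}
    {f : Tens R n k} {x : Fin m → Cell n} (h : opp R n k m j a s g f x ≠ 0) :
    ∃ x₀, f x₀ ≠ 0 ∧ ∃ (ha : a < k) (y : Fin j → Cell n),
      g (x₀ ⟨a, ha⟩) y ≠ 0 ∧ splice m a x₀ y = x := by
  obtain ⟨x₀, hx₀, hφ⟩ := Finsupp.exists_ne_zero_of_linearCombination_apply_ne_zero h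
  refine ⟨x₀, hx₀, ?_⟩
  by_cases ha : a < k
  · rw [dif_pos ha, Finsupp.smul_apply, smul_eq_mul] at hφ
    exact ⟨ha, Finsupp.exists_eq_of_mapDomain_apply_ne_zero (right_ne_zero_of_mul hφ)⟩
  · simp [ha] at hφ

lemma exists_strictMono_of_esum_apply_ne_zero {k : ℕ} {x : Fin k → Cell n}
    (h : esum R n k x ≠ 0) :
    ∃ f : Fin k → Fin n, StrictMono f ∧ (∀ p, (f p : ℕ) + 1 < n) ∧ x = fun p => .e (f p) := by
  obtain ⟨f, -, hne⟩ := Finsupp.exists_ne_zero_of_finsetSum_apply_ne_zero h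
  split_ifs at hne with hf
  · rw [bt_apply] at hne
    split_ifs at hne with hx
    · exact ⟨f, hf.1, hf.2, hx.symm⟩
    · simp at hne
  · simp at hne

lemma esum_apply_eq_zero_of_eq_F {k : ℕ} {x : Fin k → Cell n} {p : Fin k} (hx : x p = .F) :
    esum R n k x = 0 := by
  by_contra hne
  obtain ⟨f, -, -, rfl⟩ := exists_strictMono_of_esum_apply_ne_zero hne
  cases hx

lemma exists_strictMono_of_DeltaB_apply_ne_zero {k : ℕ} (hk : k ≠ 2) {c : Cell n}
    {x : Fin k → Cell n} (h : DeltaB R n k c x ≠ 0) :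
    c = .F ∧ ∃ f : Fin k → Fin n, StrictMono f ∧ (∀ p, (f p : ℕ) + 1 < n) ∧
      x = fun p => .e (f p) := by
  cases c with
  | v i => simp [DeltaB, hk] at h
  | e i => simp [DeltaB, hk] at h
  | F => exact ⟨rfl, exists_strictMono_of_esum_apply_ne_zero (by simpa [DeltaB, hk] using h)⟩

lemma exists_of_dB_e_apply_ne_zero {i : Fin n} (hi : (i : ℕ) + 1 < n) {y : Fin 1 → Cell n}
    (h : dB R n (.e i) y ≠ 0) :
    ∃ m : Fin n, (i : ℕ) ≤ m ∧ (m : ℕ) ≤ i + 1 ∧ y = fun _ => .v m := by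
  rw [dB, dif_pos hi, Finsupp.sub_apply, bt_apply, bt_apply] at h
  split_ifs at h with h₁ h₂ h₂
  · exact ⟨⟨i + 1, hi⟩, Nat.le_succ _, le_rfl, h₁.symm⟩
  · exact ⟨⟨i + 1, hi⟩, Nat.le_succ _, le_rfl, h₁.symm⟩
  · exact ⟨i, le_rfl, Nat.le_succ _, h₂.symm⟩
  · simp at h

lemma DeltaB_two_e_apply_ne_zero {i : Fin n} (hi : (i : ℕ) + 1 < n) {y : Fin 2 → Cell n}
    (h : DeltaB R n 2 (.e i) y ≠ 0) :
    y = (fun p : Fin 2 => if (p : ℕ) = 0 then Cell.v i else Cell.e i) ∨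
      y = (fun p : Fin 2 => if (p : ℕ) = 0 then Cell.e i else Cell.v ⟨i + 1, hi⟩) := by
  rw [DeltaB, if_pos rfl, dif_pos hi, Finsupp.add_apply, bt_apply, bt_apply] at h
  split_ifs at h with h₁ h₂ h₂
  · exact .inl h₁.symm
  · exact .inl h₁.symm
  · exact .inr h₂.symm
  · simp at h

lemma snd_eq_v_of_DeltaB_two_F_apply_ne_zero {x : Fin 2 → Cell n}
    (h : DeltaB R n 2 .F x ≠ 0) (hx : x 0 = .F) : ∃ m : Fin n, (m : ℕ) + 1 = n ∧ x 1 = .v m := by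
  rw [DeltaB, Finsupp.add_apply, esum_apply_eq_zero_of_eq_F hx, zero_add] at h
  split_ifs at h with hn
  · refine ⟨⟨n - 1, Nat.sub_lt hn.2 one_pos⟩, Nat.sub_add_cancel hn.2, ?_⟩
    rw [Finsupp.add_apply, bt_apply, bt_apply] at h
    split_ifs at h with h₁ h₂ h₂
    · subst h₁; simp at hx
    · subst h₁; simp at hx
    · subst h₂; simp
    · simp at h
  · simp at h

lemma fst_eq_v_of_DeltaB_two_F_apply_ne_zero {x : Fin 2 → Cell n}
    (h : DeltaB R n 2 .F x ≠ 0) (hx : x 1 = .F) : ∃ m : Fin n, (m : ℕ) = 0 ∧ x 0 = .v m := by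
  rw [DeltaB, Finsupp.add_apply, esum_apply_eq_zero_of_eq_F hx, zero_add] at h
  split_ifs at h with hn
  · refine ⟨⟨0, hn.2⟩, rfl, ?_⟩
    rw [Finsupp.add_apply, bt_apply, bt_apply] at h
    split_ifs at h with h₁ h₂ h₂
    · subst h₁; simp
    · subst h₁; simp
    · subst h₂; simp at hx
    · simp at h
  · simp at h

lemma splice_of_lt {k j m a : ℕ} (x : Fin k → Cell n) (y : Fin j → Cell n) (q : Fin m)
    (hqa : (q : ℕ) < a) (hqk : (q : ℕ) < k) : splice m a x y q = x ⟨q, hqk⟩ := by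
  rw [splice, dif_pos ⟨hqa, hqk⟩]

lemma splice_of_le_of_lt {k j m a : ℕ} (x : Fin k → Cell n) (y : Fin j → Cell n) (q : Fin m)
    (haq : a ≤ (q : ℕ)) (hqj : (q : ℕ) - a < j) : splice m a x y q = y ⟨(q : ℕ) - a, hqj⟩ := by
  rw [splice, dif_neg (by omega), dif_pos ⟨haq, hqj⟩]

lemma splice_of_le {k j m a : ℕ} (x : Fin k → Cell n) (y : Fin j → Cell n) (q : Fin m)
    (hq : a + j ≤ (q : ℕ)) (hqk : (q : ℕ) + 1 - j < k) :
    splice m a x y q = x ⟨(q : ℕ) + 1 - j, hqk⟩ := by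
  rw [splice, dif_neg (by omega), dif_neg (by omega), dif_pos hqk]

def OneVertexFactor {k : ℕ} (x : Fin k → Cell n) : Prop :=
  (∃! p : Fin k, ∃ m : Fin n, x p = Cell.v m) ∧
    (∀ (p : Fin k) (hp : (p : ℕ) + 1 < k) (i m : Fin n),
      x p = Cell.e i → x ⟨(p : ℕ) + 1, hp⟩ = Cell.v m → i < m) ∧
    (∀ (p : Fin k) (hp : (p : ℕ) + 1 < k) (m j : Fin n),
      x p = Cell.v m → x ⟨(p : ℕ) + 1, hp⟩ = Cell.e j → m ≤ j)

lemma oneVertexFactor_of_edges_around {k : ℕ} {x : Fin k → Cell n} {p₀ : ℕ} (hp₀ : p₀ < k)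
    (m : Fin n) (hv : x ⟨p₀, hp₀⟩ = .v m)
    (hlt : ∀ q : Fin k, (q : ℕ) < p₀ → ∃ i < m, x q = .e i)
    (hgt : ∀ q : Fin k, p₀ < q → ∃ j, m ≤ j ∧ x q = .e j) : OneVertexFactor x := by
  have hvert : ∀ p m', x p = .v m' → (p : ℕ) = p₀ ∧ m' = m := by
    intro p m' hp
    rcases lt_trichotomy (p : ℕ) p₀ with h | h | h
    · obtain ⟨i, -, hi⟩ := hlt p h
      cases hi ▸ hp
    · obtain rfl : p = ⟨p₀, hp₀⟩ := Fin.ext h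
      cases hv ▸ hp
      exact ⟨rfl, rfl⟩
    · obtain ⟨j, -, hj⟩ := hgt p h
      cases hj ▸ hp
  refine ⟨⟨⟨p₀, hp₀⟩, ⟨m, hv⟩, fun p ⟨m', hp⟩ => Fin.ext (hvert p m' hp).1⟩, ?_, ?_⟩
  · intro p hp i m' hi hm'
    obtain ⟨hp₀, rfl⟩ := hvert _ _ hm'
    obtain ⟨i', hi'm, hi'⟩ := hlt p (by rw [← hp₀]; exact Nat.lt_succ_self _)
    cases hi ▸ hi'
    exact hi'm
  · intro p hp m' j hm' hj
    obtain ⟨hp₀, rfl⟩ := hvert _ _ hm'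
    obtain ⟨j', hmj', hj'⟩ := hgt ⟨(p : ℕ) + 1, hp⟩ (by rw [← hp₀]; exact Nat.lt_succ_self _)
    cases hj ▸ hj'
    exact hmj'

lemma oneVertexFactor_splice_vertex {k : ℕ} {f : Fin k → Fin n} (hf : StrictMono f) {a : ℕ}
    (ha : a < k) {m : Fin n} (hm₁ : (f ⟨a, ha⟩ : ℕ) ≤ m) (hm₂ : (m : ℕ) ≤ f ⟨a, ha⟩ + 1) :
    OneVertexFactor (splice k a (fun q => Cell.e (f q)) (fun _ : Fin 1 => Cell.v m)) := by
  refine oneVertexFactor_of_edges_around ha m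
    (splice_of_le_of_lt _ _ ⟨a, ha⟩ le_rfl (Nat.sub_self a ▸ Nat.one_pos)) (fun q hq => ?_)
    (fun q hq => ?_)
  · have := hf.val_lt_val q.isLt ha hq
    exact ⟨f ⟨q, q.isLt⟩, Fin.lt_def.mpr (by omega), splice_of_lt _ _ q hq q.isLt⟩
  · have := hf.val_lt_val ha (by omega) (show a < (q : ℕ) + 1 - 1 by omega)
    refine ⟨f ⟨(q : ℕ) + 1 - 1, by omega⟩, Fin.le_def.mpr (by omega), ?_⟩
    exact splice_of_le _ _ q hq _

lemma oneVertexFactor_splice_vertex_edge {k' k : ℕ} (hk : k = k' + 1) {f : Fin k' → Fin n}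
    (hf : StrictMono f) {a : ℕ} (ha : a < k') :
    OneVertexFactor (splice k a (fun q => Cell.e (f q))
      (fun p : Fin 2 => if (p : ℕ) = 0 then Cell.v (f ⟨a, ha⟩) else Cell.e (f ⟨a, ha⟩))) := by
  refine oneVertexFactor_of_edges_around (show a < k by omega) (f ⟨a, ha⟩)
    ((splice_of_le_of_lt (a := a) _ _ ⟨a, _⟩ le_rfl (by simp)).trans (if_pos (Nat.sub_self a)))
    (fun q hq => ?_) (fun q hq => ?_)
  · have := hf.val_lt_val (by omega) ha hq
    exact ⟨f ⟨q, by omega⟩, Fin.lt_def.mpr this, splice_of_lt _ _ q hq _⟩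
  · rcases Nat.lt_or_ge (q : ℕ) (a + 2) with hqa | hqa
    · refine ⟨f ⟨a, ha⟩, le_rfl, ?_⟩
      rw [splice_of_le_of_lt _ _ q hq.le (by omega), if_neg (by simp only; omega)]
    · have := hf.val_lt_val ha (by omega) (show a < (q : ℕ) + 1 - 2 by omega)
      refine ⟨f ⟨(q : ℕ) + 1 - 2, by omega⟩, Fin.le_def.mpr (by omega), ?_⟩
      exact splice_of_le _ _ q hqa _

lemma oneVertexFactor_splice_edge_vertex {k' k : ℕ} (hk : k = k' + 1) {f : Fin k' → Fin n}
    (hf : StrictMono f) (hfn : ∀ p, (f p : ℕ) + 1 < n) {a : ℕ} (ha : a < k') :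
    OneVertexFactor (splice k a (fun q => Cell.e (f q))
      (fun p : Fin 2 => if (p : ℕ) = 0 then Cell.e (f ⟨a, ha⟩)
        else Cell.v ⟨f ⟨a, ha⟩ + 1, hfn ⟨a, ha⟩⟩)) := by
  refine oneVertexFactor_of_edges_around (show a + 1 < k by omega) ⟨f ⟨a, ha⟩ + 1, hfn ⟨a, ha⟩⟩
    ((splice_of_le_of_lt (a := a) _ _ ⟨a + 1, _⟩ (Nat.le_succ a) (by simp)).trans
      (if_neg (by simp)))
    (fun q hq => ?_) (fun q hq => ?_)
  · rcases Nat.lt_or_ge (q : ℕ) a with hqa | hqa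
    · have := hf.val_lt_val (by omega) ha hqa
      exact ⟨f ⟨q, by omega⟩, Fin.lt_def.mpr (by simp only; omega), splice_of_lt _ _ q hqa _⟩
    · refine ⟨f ⟨a, ha⟩, Fin.lt_def.mpr (Nat.lt_succ_self _), ?_⟩
      rw [splice_of_le_of_lt _ _ q hqa (by omega), if_pos (by simp only; omega)]
  · have := hf.val_lt_val ha (by omega) (show a < (q : ℕ) + 1 - 2 by omega)
    refine ⟨f ⟨(q : ℕ) + 1 - 2, by omega⟩, Fin.le_def.mpr (by simp only; omega), ?_⟩
    exact splice_of_le _ _ q (by omega) _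

lemma oneVertexFactor_splice_edges_vertex {j k : ℕ} (hk : k = j + 1) {x₀ : Fin 2 → Cell n}
    {m : Fin n} (hm : (m : ℕ) + 1 = n) (hx₀ : x₀ 1 = .v m) {g : Fin j → Fin n}
    (hg : ∀ p, (g p : ℕ) + 1 < n) :
    OneVertexFactor (splice k 0 x₀ (fun q => Cell.e (g q))) := by
  refine oneVertexFactor_of_edges_around (show j < k by omega) m
    ((splice_of_le (a := 0) _ _ ⟨j, _⟩ (by simp) (by omega)).trans (by simpa using hx₀))
    (fun q hq => ?_) (fun q hq => absurd q.isLt (by omega))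
  have := hg ⟨q, hq⟩
  exact ⟨g ⟨q, hq⟩, Fin.lt_def.mpr (by omega), splice_of_le_of_lt _ _ q (Nat.zero_le _) hq⟩

lemma oneVertexFactor_splice_vertex_edges {j k : ℕ} (hk : k = j + 1) {x₀ : Fin 2 → Cell n}
    {m : Fin n} (hm : (m : ℕ) = 0) (hx₀ : x₀ 0 = .v m) (g : Fin j → Fin n) :
    OneVertexFactor (splice k 1 x₀ (fun q => Cell.e (g q))) := by
  refine oneVertexFactor_of_edges_around (show 0 < k by omega) m
    ((splice_of_lt (a := 1) _ _ ⟨0, _⟩ Nat.one_pos Nat.two_pos).trans hx₀)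
    (fun q hq => absurd hq (Nat.not_lt_zero _)) (fun q hq => ?_)
  exact ⟨g ⟨(q : ℕ) - 1, by omega⟩, Fin.le_def.mpr (by omega),
    splice_of_le_of_lt _ _ q hq (by omega)⟩

lemma oneVertexFactor_of_sum_opp_dB_apply_ne_zero {k : ℕ} (hk : k ≠ 2) {x : Fin k → Cell n}
    (h : (∑ p ∈ Finset.range k, opp R n k k 1 p (-1) (dB R n) (DeltaB R n k .F)) x ≠ 0) :
    OneVertexFactor x := by
  obtain ⟨p, -, hp⟩ := Finsupp.exists_ne_zero_of_finsetSum_apply_ne_zero h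
  obtain ⟨x₀, hx₀, hpk, y, hy, rfl⟩ := exists_of_opp_apply_ne_zero hp
  obtain ⟨-, f, hf, hfn, rfl⟩ := exists_strictMono_of_DeltaB_apply_ne_zero hk hx₀
  obtain ⟨m, hm₁, hm₂, rfl⟩ := exists_of_dB_e_apply_ne_zero (hfn ⟨p, hpk⟩) hy
  exact oneVertexFactor_splice_vertex hf hpk hm₁ hm₂

lemma oneVertexFactor_of_opp_DeltaB_apply_DeltaB_two_F_ne_zero {k : ℕ} (hk₀ : 0 < k)
    (hk : k - 1 ≠ 2) {s : ℤ} {x : Fin k → Cell n}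
    (h : (opp R n 2 k (k - 1) 0 s (DeltaB R n (k - 1)) (DeltaB R n 2 .F) +
      opp R n 2 k (k - 1) 1 s (DeltaB R n (k - 1)) (DeltaB R n 2 .F)) x ≠ 0) :
    OneVertexFactor x := by
  obtain ⟨a, -, hterm⟩ : ∃ a ∈ Finset.range 2,
      opp R n 2 k (k - 1) a s (DeltaB R n (k - 1)) (DeltaB R n 2 .F) x ≠ 0 :=
    Finsupp.exists_ne_zero_of_finsetSum_apply_ne_zero (by simpa [Finset.sum_range_succ] using h)
  obtain ⟨x₀, hx₀, ha, y, hy, rfl⟩ := exists_of_opp_apply_ne_zero hterm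
  obtain ⟨hF, g, -, hg, rfl⟩ := exists_strictMono_of_DeltaB_apply_ne_zero hk hy
  obtain rfl | rfl : a = 0 ∨ a = 1 := by omega
  · obtain ⟨m, hm, hx₀m⟩ := snd_eq_v_of_DeltaB_two_F_apply_ne_zero hx₀ hF
    exact oneVertexFactor_splice_edges_vertex (by omega) hm hx₀m hg
  · obtain ⟨m, hm, hx₀m⟩ := fst_eq_v_of_DeltaB_two_F_apply_ne_zero hx₀ hF
    exact oneVertexFactor_splice_vertex_edges (by omega) hm hx₀m g

lemma oneVertexFactor_of_sum_opp_DeltaB_two_apply_ne_zero {k : ℕ} (hk : k - 1 ≠ 2)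
    {x : Fin k → Cell n}
    (h : (∑ j ∈ Finset.range (k - 1),
      opp R n (k - 1) k 2 j 0 (DeltaB R n 2) (DeltaB R n (k - 1) .F)) x ≠ 0) :
    OneVertexFactor x := by
  obtain ⟨a, -, hterm⟩ := Finsupp.exists_ne_zero_of_finsetSum_apply_ne_zero h
  obtain ⟨x₀, hx₀, ha, y, hy, rfl⟩ := exists_of_opp_apply_ne_zero hterm
  obtain ⟨-, f, hf, hfn, rfl⟩ := exists_strictMono_of_DeltaB_apply_ne_zero hk hx₀
  rcases DeltaB_two_e_apply_ne_zero (hfn ⟨a, ha⟩) hy with rfl | rfl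
  · exact oneVertexFactor_splice_vertex_edge (by omega) hf ha
  · exact oneVertexFactor_splice_edge_vertex (by omega) hf hfn ha

end

theorem one_vertex_factor_general (R : Type) [CommRing R] (n k : ℕ)
    (hk3 : 3 < k) :
    ∀ E ∈ ({∑ p ∈ Finset.range k, (opp R n k k 1 p (-1) (dB R n)) (DeltaB R n k Cell.F),
            (opp R n 2 k (k - 1) 0 ((k : ℤ) - 3) (DeltaB R n (k - 1))) (DeltaB R n 2 Cell.F) +
              (opp R n 2 k (k - 1) 1 ((k : ℤ) - 3) (DeltaB R n (k - 1)))
                (DeltaB R n 2 Cell.F),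
            ∑ j ∈ Finset.range (k - 1),
              (opp R n (k - 1) k 2 j 0 (DeltaB R n 2)) (DeltaB R n (k - 1) Cell.F)} :
          Set (Tens R n k)),
      ∀ x : Fin k → Cell n, E x ≠ 0 →
        ((∃! p : Fin k, ∃ m : Fin n, x p = Cell.v m) ∧
          (∀ (p : Fin k) (hp : (p : ℕ) + 1 < k) (i m : Fin n),
            x p = Cell.e i → x ⟨(p : ℕ) + 1, hp⟩ = Cell.v m → i < m) ∧
          (∀ (p : Fin k) (hp : (p : ℕ) + 1 < k) (m j : Fin n),
            x p = Cell.v m → x ⟨(p : ℕ) + 1, hp⟩ = Cell.e j → m ≤ j)) := by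
  intro E hE x hx
  rcases hE with rfl | rfl | rfl
  · exact oneVertexFactor_of_sum_opp_dB_apply_ne_zero (by omega) hx
  · exact oneVertexFactor_of_opp_DeltaB_apply_DeltaB_two_F_ne_zero (by omega) (by omega) hx
  · exact oneVertexFactor_of_sum_opp_DeltaB_two_apply_ne_zero (by omega) hx

/-- For `3 < k < n`, every basis tensor occurring with nonzero coefficient in
`Σ_p (1^{⊗(p-1)}⊗∂⊗1^{⊗(k-p)})(Δ_k(P))`, in `(Δ_{k-1}⊗1)(Δ₂(P)) + (1⊗Δ_{k-1})(Δ₂(P))`, or in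
`Σ_j (1^{⊗j}⊗Δ₂⊗1^{⊗(k-2-j)})(Δ_{k-1}(P))` contains exactly one vertex factor `v_m`; moreover
an edge `e_i` immediately to the left of the vertex satisfies `i < m` and an edge `e_j`
immediately to the right satisfies `m ≤ j` (1-based indexing; here everything is 0-based,
which shifts both indices by one and preserves the inequalities). -/
theorem one_vertex_factor (R : Type) [CommRing R] (n k : ℕ) (hn : 3 ≤ n)
    (hk3 : 3 < k) (hkn : k < n) :
    ∀ E ∈ ({∑ p ∈ Finset.range k, (opp R n k k 1 p (-1) (dB R n)) (DeltaB R n k Cell.F),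
            (opp R n 2 k (k - 1) 0 ((k : ℤ) - 3) (DeltaB R n (k - 1))) (DeltaB R n 2 Cell.F) +
              (opp R n 2 k (k - 1) 1 ((k : ℤ) - 3) (DeltaB R n (k - 1)))
                (DeltaB R n 2 Cell.F),
            ∑ j ∈ Finset.range (k - 1),
              (opp R n (k - 1) k 2 j 0 (DeltaB R n 2)) (DeltaB R n (k - 1) Cell.F)} :
          Set (Tens R n k)),
      ∀ x : Fin k → Cell n, E x ≠ 0 →
        ((∃! p : Fin k, ∃ m : Fin n, x p = Cell.v m) ∧
          (∀ (p : Fin k) (hp : (p : ℕ) + 1 < k) (i m : Fin n),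
            x p = Cell.e i → x ⟨(p : ℕ) + 1, hp⟩ = Cell.v m → i < m) ∧
          (∀ (p : Fin k) (hp : (p : ℕ) + 1 < k) (m j : Fin n),
            x p = Cell.v m → x ⟨(p : ℕ) + 1, hp⟩ = Cell.e j → m ≤ j)) :=
  one_vertex_factor_general R n k hk3
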